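/- For every integer k ≥ 2, the polynomial identity r_k(X) · q_k(X) = p_k(X^k) holds in ℤ[X]. -/

import Mathlib

/-!
Write `k = n + 1`, `Y = X ^ k` and `T m = columnPoly n m`, the `m`-th column of `P` (rows `0..n`)
read as a polynomial. Since `Q` is the row difference of `P`, summation by
parts turns the block of `q_k` at `Y ^ (n - m)` into `(X - 1) * T m` for `m ≥ 1`, so
`q_k = Y ^ k + (X - 1) * ∑_m T m * Y ^ (n - m)`.
As `(X - 1) * r_k = Y * (X - 2) + 1`, the product `r_k * q_k` telescopes in powers of `Y`, and the
recurrence of `P` gives `(X - 2) * T (m + 1) + T m = -P k (m + 1)`, the coefficients of `p_k(Y)`.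
-/

/-- The recursive triangle `P` from the paper: `P 0 0 = -1`, `P 0 (j+1) = 0`,
`P (i+1) 0 = -1`, and `P i j = 2 * P (i-1) j - P (i-1) (j-1)` for `i, j ≥ 1`. -/
def P : ℕ → ℕ → ℤ
  | 0, 0 => -1
  | 0, _ + 1 => 0
  | _ + 1, 0 => -1
  | i + 1, j + 1 => 2 * P i (j + 1) - P i j

/-- The triangle `Q`, the backward difference of `P` in the row index. -/
def Q : ℕ → ℕ → ℤ
  | 0, _ => 0
  | i + 1, j => P (i + 1) j - P i j

open Polynomial Finset

section HornerSums

variable {R : Type*} [CommRing R]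

theorem sum_range_mul_pow_succ_sub (f : ℕ → R) (y : R) (n : ℕ) :
    ∑ m ∈ range (n + 1), f m * y ^ (n + 1 - m) =
      y * ∑ m ∈ range (n + 1), f m * y ^ (n - m) := by
  rw [mul_sum]
  refine sum_congr rfl fun m hm => ?_
  rw [Nat.sub_add_comm (Nat.lt_succ_iff.mp (mem_range.mp hm)), pow_succ]
  ring

theorem sum_range_succ_mul_pow_sub (f : ℕ → R) (y : R) (n : ℕ) :
    ∑ m ∈ range (n + 2), f m * y ^ (n + 1 - m) =
      y * ∑ m ∈ range (n + 1), f m * y ^ (n - m) + f (n + 1) := by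
  rw [sum_range_succ, sum_range_mul_pow_succ_sub, Nat.sub_self, pow_zero, mul_one]

theorem mul_add_one_mul_sum_mul_pow (y a : R) (f : ℕ → R) (n : ℕ) :
    (y * a + 1) * ∑ m ∈ range (n + 1), f m * y ^ (n - m) =
      a * f 0 * y ^ (n + 1) + ∑ m ∈ range (n + 1), (a * f (m + 1) + f m) * y ^ (n - m) -
        a * f (n + 1) := by
  induction n with
  | zero => simp only [zero_add, range_one, sum_singleton, pow_one]; ring
  | succ n ih =>
    rw [sum_range_succ_mul_pow_sub, sum_range_succ_mul_pow_sub (fun m => a * f (m + 1) + f m)]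
    linear_combination y * ih

end HornerSums

theorem Finset.sum_Icc_one_eq_sum_range {M : Type*} [AddCommMonoid M] (f : ℕ → M) (k : ℕ) :
    ∑ i ∈ Icc 1 k, f i = ∑ i ∈ range k, f (i + 1) := by
  rw [range_eq_Ico, sum_Ico_add', ← Ico_add_one_right_eq_Icc, zero_add]

theorem P_zero_right (i : ℕ) : P i 0 = -1 := by cases i <;> rfl

theorem P_succ_succ (i j : ℕ) : P (i + 1) (j + 1) = 2 * P i (j + 1) - P i j := rfl

theorem P_eq_zero_of_lt {i j : ℕ} (h : i < j) : P i j = 0 := by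
  induction i generalizing j with
  | zero => obtain ⟨j, rfl⟩ := Nat.exists_eq_succ_of_ne_zero h.ne'; rfl
  | succ i ih =>
    obtain ⟨j, rfl⟩ := Nat.exists_eq_succ_of_ne_zero (Nat.ne_zero_of_lt h)
    rw [P_succ_succ, ih (by omega), ih (by omega)]
    norm_num

theorem Q_eq_zero_of_lt {i j : ℕ} (h : i < j) : Q i j = 0 := by
  cases i with
  | zero => rfl
  | succ i => rw [Q, P_eq_zero_of_lt h, P_eq_zero_of_lt (by omega)]; norm_num

noncomputable def columnPoly (n m : ℕ) : ℤ[X] :=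
  ∑ i ∈ range (n + 1), C (P i m) * X ^ (n - i)

theorem columnPoly_zero_left (m : ℕ) : columnPoly 0 m = C (P 0 m) := by
  simp [columnPoly]

theorem columnPoly_succ (n m : ℕ) :
    columnPoly (n + 1) m = X * columnPoly n m + C (P (n + 1) m) :=
  sum_range_succ_mul_pow_sub _ _ n

theorem columnPoly_zero_right (n : ℕ) : columnPoly n 0 = -∑ i ∈ range (n + 1), X ^ i := by
  rw [columnPoly, ← sum_range_reflect, ← sum_neg_distrib]
  refine sum_congr rfl fun i hi => ?_
  rw [P_zero_right, add_tsub_cancel_right, Nat.sub_sub_self (Nat.lt_succ_iff.mp (mem_range.mp hi))]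
  simp

theorem columnPoly_eq_zero_of_lt {n m : ℕ} (h : n < m) : columnPoly n m = 0 :=
  sum_eq_zero fun i hi => by rw [P_eq_zero_of_lt (by simp at hi; omega), map_zero, zero_mul]

theorem X_sub_two_mul_columnPoly_succ_add (n m : ℕ) :
    (X - 2) * columnPoly n (m + 1) + columnPoly n m = -C (P (n + 1) (m + 1)) := by
  induction n with
  | zero =>
    simp [columnPoly_zero_left, P_succ_succ, P_eq_zero_of_lt m.succ_pos]
  | succ n ih =>
    rw [columnPoly_succ, columnPoly_succ, P_succ_succ (n + 1)]
    simp only [map_sub, map_mul, map_ofNat]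
    linear_combination X * ih

theorem sum_C_Q_mul_X_pow (n m : ℕ) :
    ∑ i ∈ range (n + 1), C (Q i m) * X ^ (n + 1 - i) =
      (X - 1) * columnPoly n m + C (P n m) - C (P 0 m) * X ^ (n + 1) := by
  induction n with
  | zero => rw [sum_range_one, columnPoly_zero_left, Q, map_zero]; ring
  | succ n ih =>
    rw [sum_range_mul_pow_succ_sub, sum_range_succ, Nat.sub_self, pow_zero, mul_one, ih,
      columnPoly_succ, Q]
    simp only [map_sub]
    ring

noncomputable def rk (k : ℕ) : ℤ[X] := X ^ k - ∑ i ∈ Icc 1 k, X ^ (k - i)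

noncomputable def pk (k : ℕ) : ℤ[X] := X ^ k - ∑ i ∈ Icc 1 k, C (P k i) * X ^ (k - i)

noncomputable def qBlock (k m : ℕ) : ℤ[X] :=
  C (-P (k - 1) m) + ∑ i ∈ Icc m (k - 1), C (Q i m) * X ^ (k - i)

noncomputable def qk (k : ℕ) : ℤ[X] :=
  X ^ (k * (k - 1)) + ∑ j ∈ Icc 0 (k - 2), X ^ (k * j) * qBlock k (k - 1 - j)

theorem rk_eq (k : ℕ) : rk k = X ^ k - ∑ i ∈ range k, X ^ i := by
  rw [rk, sum_Icc_one_eq_sum_range, ← sum_range_reflect (fun i => X ^ i) k]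
  simp only [Nat.sub_add_eq, Nat.sub_right_comm k _ 1]

theorem pk_succ_comp (n : ℕ) (Y : ℤ[X]) :
    (pk (n + 1)).comp Y =
      Y ^ (n + 1) - ∑ m ∈ range (n + 1), C (P (n + 1) (m + 1)) * Y ^ (n - m) := by
  simp only [pk, sub_comp, Polynomial.sum_comp, mul_comp, C_comp, X_pow_comp,
    sum_Icc_one_eq_sum_range, Nat.add_sub_add_right]

theorem qBlock_succ {n m : ℕ} (hm : 0 < m) : qBlock (n + 1) m = (X - 1) * columnPoly n m := by
  have hsub : Icc m n ⊆ range (n + 1) := fun i hi => by simp at hi ⊢; omega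
  rw [qBlock, add_tsub_cancel_right, sum_subset hsub fun i hi hni => by
    rw [Q_eq_zero_of_lt (by simp at hi hni; omega)]; simp,
    sum_C_Q_mul_X_pow, P_eq_zero_of_lt hm]
  simp

theorem qk_succ {n : ℕ} (hn : 1 ≤ n) :
    qk (n + 1) = (X ^ (n + 1)) ^ (n + 1) +
      (X - 1) * ∑ m ∈ range (n + 1), columnPoly n m * (X ^ (n + 1)) ^ (n - m) := by
  set Y : ℤ[X] := X ^ (n + 1)
  have hIcc : Icc 0 (n + 1 - 2) = range n := by ext; simp only [mem_Icc, mem_range]; omega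
  have hblocks : ∑ j ∈ range n, Y ^ j * qBlock (n + 1) (n - j) =
      (X - 1) * ∑ m ∈ range n, columnPoly n (m + 1) * Y ^ (n - 1 - m) := by
    rw [← sum_range_reflect, mul_sum]
    refine sum_congr rfl fun j hj => ?_
    have hj := mem_range.mp hj
    rw [qBlock_succ (by omega), show n - (n - 1 - j) = j + 1 by omega]
    ring
  have hpeel : ∑ m ∈ range (n + 1), columnPoly n m * Y ^ (n - m) =
      ∑ m ∈ range n, columnPoly n (m + 1) * Y ^ (n - 1 - m) + columnPoly n 0 * Y ^ n := by
    simp only [sum_range_succ', Nat.sub_add_eq, Nat.sub_right_comm n _ 1, Nat.sub_zero]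
  simp only [qk, add_tsub_cancel_right, hIcc, pow_mul]
  rw [hblocks, hpeel, columnPoly_zero_right]
  linear_combination Y ^ n * geom_sum_mul (X : ℤ[X]) (n + 1)

open Polynomial in
/-- Equation (2.6): `r_k(X) * q_k(X) = p_k(X^k)` in `ℤ[X]`, where
`r_k(X) = X^k - ∑_{i=1}^k X^(k-i)`, `p_k(X) = X^k - ∑_{i=1}^k P k i * X^(k-i)`, and
`q_k(X) = X^(k(k-1)) + ∑_{j=0}^{k-2} X^(kj) * (-P (k-1) (k-1-j)
          + ∑_{i=k-1-j}^{k-1} Q i (k-1-j) * X^(k-i))`. -/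
theorem rk_mul_qk_eq_pk_comp (k : ℕ) (hk : 2 ≤ k) :
    ((X : ℤ[X]) ^ k - ∑ i ∈ Finset.Icc 1 k, X ^ (k - i)) *
      ((X : ℤ[X]) ^ (k * (k - 1)) +
        ∑ j ∈ Finset.Icc 0 (k - 2), X ^ (k * j) *
          (C (-P (k - 1) (k - 1 - j)) +
            ∑ i ∈ Finset.Icc (k - 1 - j) (k - 1), C (Q i (k - 1 - j)) * X ^ (k - i))) =
    ((X : ℤ[X]) ^ k - ∑ i ∈ Finset.Icc 1 k, C (P k i) * X ^ (k - i)).comp (X ^ k) := by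
  obtain ⟨n, rfl⟩ : ∃ n, k = n + 1 := ⟨k - 1, by omega⟩
  change rk (n + 1) * qk (n + 1) = (pk (n + 1)).comp (X ^ (n + 1))
  rw [rk_eq, qk_succ (by omega), pk_succ_comp]
  set Y : ℤ[X] := X ^ (n + 1)
  set H := ∑ m ∈ range (n + 1), columnPoly n m * Y ^ (n - m)
  have htelescope := mul_add_one_mul_sum_mul_pow Y (X - 2) (columnPoly n) n
  simp only [X_sub_two_mul_columnPoly_succ_add, columnPoly_zero_right,
    columnPoly_eq_zero_of_lt n.lt_succ_self, neg_mul, sum_neg_distrib] at htelescope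
  linear_combination htelescope - (Y ^ (n + 1) + H) * geom_sum_mul (X : ℤ[X]) (n + 1)
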